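/- Let n ≥ t ≥ 1 be integers, let p1, …, pt ∈ ℤ^n, let r ∈ ℤ^n, let M1, …, Mt be integers, set a = M1·p1 + ⋯ + Mt·pt + r, and let A be the (n+1)×n integer matrix with first row a and remaining rows the identity. Let P be the t×n matrix with rows p1,…,pt and N(P) = {x ∈ ℤ^n : P·x = 0} its kernel lattice. Let c_n ≥ 1 be real, and let U be an n×n integer matrix of determinant ±1 such that Ã = A·U satisfies max{‖Ã_{:,1}‖, …, ‖Ã_{:,ℓ}‖} ≤ c_n·Λ_ℓ(L(A)) for every ℓ = 1,…,n, where L(A) = {A·x : x ∈ ℤ^n}. Then for every integer s with 1 ≤ s ≤ n − t and every index j ≤ s, ‖Ã_{:,j}‖ ≤ c_n·(‖r‖ + 1)·Λ_s(N(P)). -/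

import Mathlib

open Finset

/-- Euclidean norm of an integer vector. -/
noncomputable def vecEnorm {m : ℕ} (v : Fin m → ℤ) : ℝ :=
  Real.sqrt (∑ i, ((v i : ℝ)) ^ 2)

/-- The `k`-th successive minimum of a set (lattice) of integer vectors. -/
noncomputable def succMin {m : ℕ} (L : Set (Fin m → ℤ)) (k : ℕ) : ℝ :=
  sInf {s : ℝ | ∃ w : Fin k → (Fin m → ℤ),
    (∀ j, w j ∈ L) ∧ LinearIndependent ℤ w ∧ ∀ j, vecEnorm (w j) ≤ s}

/-! The reduction hypothesis bounds the first `s` columns of `A * U` by `c * Λ_s(L(A))`, so it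
suffices to show `Λ_s(L(A)) ≤ (‖r‖ + 1) * Λ_s(N(P))`. The map `x ↦ A x` is injective and carries
`N(P)` into `L(A)`; on `N(P)` the first coordinate `a ⬝ᵥ x` collapses to `r ⬝ᵥ x`, so by
Cauchy–Schwarz `‖A x‖ ≤ |r ⬝ᵥ x| + ‖x‖ ≤ (‖r‖ + 1) * ‖x‖`. Images of `s` independent short kernel
vectors are therefore `s` independent lattice vectors at most `‖r‖ + 1` times longer, and such
kernel vectors exist because `N(P)` has rank at least `n - t` by rank–nullity. -/

open Matrix

theorem vecEnorm_nonneg {m : ℕ} (v : Fin m → ℤ) : 0 ≤ vecEnorm v := Real.sqrt_nonneg _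

theorem vecEnorm_cons_le {m : ℕ} (z : ℤ) (v : Fin m → ℤ) :
    vecEnorm (Fin.cons z v : Fin (m + 1) → ℤ) ≤ |(z : ℝ)| + vecEnorm v := by
  have hv : vecEnorm v ^ 2 = ∑ i, (v i : ℝ) ^ 2 :=
    Real.sq_sqrt (sum_nonneg fun i _ => sq_nonneg _)
  rw [vecEnorm, Fin.sum_univ_succ, Real.sqrt_le_left (by positivity [vecEnorm_nonneg v])]
  simp only [Fin.cons_zero, Fin.cons_succ, ← hv]
  nlinarith [sq_abs (z : ℝ), abs_nonneg (z : ℝ), vecEnorm_nonneg v]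

theorem abs_dotProduct_le {m : ℕ} (u v : Fin m → ℤ) :
    |((u ⬝ᵥ v : ℤ) : ℝ)| ≤ vecEnorm u * vecEnorm v := by
  push_cast [dotProduct]
  refine abs_le.2 ⟨?_, Real.sum_mul_le_sqrt_mul_sqrt _ _ _⟩
  have := Real.sum_mul_le_sqrt_mul_sqrt univ (fun i => -(u i : ℝ)) (fun i => (v i : ℝ))
  simp only [neg_mul, sum_neg_distrib, even_two, Even.neg_pow] at this
  unfold vecEnorm
  linarith

theorem vecEnorm_cons_dotProduct_le {m : ℕ} (r x : Fin m → ℤ) :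
    vecEnorm (Fin.cons (r ⬝ᵥ x) x : Fin (m + 1) → ℤ) ≤ (vecEnorm r + 1) * vecEnorm x := by
  have := abs_dotProduct_le r x
  linarith [vecEnorm_cons_le (r ⬝ᵥ x) x]

section succMin

variable {m k : ℕ} {L : Set (Fin m → ℤ)}

-- `0 < k` is needed: for `k = 0` every real is in the defining set, whose `sInf` is the junk `0`.
theorem succMin_le (hk : 0 < k) {w : Fin k → Fin m → ℤ} (hwL : ∀ j, w j ∈ L)
    (hw : LinearIndependent ℤ w) {b : ℝ} (hb : ∀ j, vecEnorm (w j) ≤ b) : succMin L k ≤ b :=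
  csInf_le ⟨0, fun _ ⟨_, _, _, hv⟩ => (vecEnorm_nonneg _).trans (hv ⟨0, hk⟩)⟩ ⟨w, hwL, hw, hb⟩

theorem le_succMin (hL : ∃ w : Fin k → Fin m → ℤ, (∀ j, w j ∈ L) ∧ LinearIndependent ℤ w)
    {a : ℝ} (ha : ∀ w : Fin k → Fin m → ℤ, (∀ j, w j ∈ L) → LinearIndependent ℤ w →
      ∀ b : ℝ, (∀ j, vecEnorm (w j) ≤ b) → a ≤ b) : a ≤ succMin L k := by
  obtain ⟨w, hwL, hw⟩ := hL
  refine le_csInf ⟨∑ i, vecEnorm (w i), w, hwL, hw, fun j => ?_⟩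
    fun b ⟨v, hvL, hv, hb⟩ => ha v hvL hv b hb
  exact single_le_sum (fun i _ => vecEnorm_nonneg (w i)) (mem_univ j)

theorem succMin_le_mul_succMin_of_injective {m' : ℕ} {L' : Set (Fin m' → ℤ)}
    (f : (Fin m → ℤ) →ₗ[ℤ] (Fin m' → ℤ)) (hf : Function.Injective f) (hfL : Set.MapsTo f L L')
    {C : ℝ} (hC : 0 < C) (hnorm : ∀ x ∈ L, vecEnorm (f x) ≤ C * vecEnorm x) (hk : 0 < k)
    (hL : ∃ w : Fin k → Fin m → ℤ, (∀ j, w j ∈ L) ∧ LinearIndependent ℤ w) :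
    succMin L' k ≤ C * succMin L k := by
  rw [← div_le_iff₀' hC]
  refine le_succMin hL fun w hwL hw b hb => (div_le_iff₀' hC).2 ?_
  refine succMin_le hk (fun j => hfL (hwL j)) (hw.map' f (LinearMap.ker_eq_bot.2 hf)) fun j => ?_
  exact (hnorm _ (hwL j)).trans (by gcongr; exact hb j)

end succMin

theorem exists_linearIndependent_mulVec_eq_zero {R : Type*} [CommRing R] [IsDomain R]
    [IsNoetherianRing R] {t n s : ℕ} (P : Matrix (Fin t) (Fin n) R) (hs : s ≤ n - t) :
    ∃ w : Fin s → Fin n → R, (∀ j, P *ᵥ w j = 0) ∧ LinearIndependent R w := by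
  have hker : s ≤ Module.finrank R (LinearMap.ker P.mulVecLin) := by
    have hsum := (LinearMap.ker P.mulVecLin).finrank_quotient_add_finrank
    rw [P.mulVecLin.quotKerEquivRange.finrank_eq, Module.finrank_fin_fun] at hsum
    have hrange := (LinearMap.range P.mulVecLin).finrank_le
    rw [Module.finrank_fin_fun] at hrange
    omega
  obtain ⟨w, hw⟩ := exists_linearIndependent_of_le_finrank hker
  exact ⟨fun j => w j, fun j => (w j).2, hw.map' _ (Submodule.ker_subtype _)⟩

theorem mulVec_eq_cons_of_rows {R : Type*} [NonAssocSemiring R] {n : ℕ}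
    {A : Matrix (Fin (n + 1)) (Fin n) R} {a : Fin n → R} (hA0 : ∀ j, A 0 j = a j)
    (hAsucc : ∀ i : Fin n, ∀ j, A i.succ j = if i = j then 1 else 0) (x : Fin n → R) :
    A *ᵥ x = Fin.cons (a ⬝ᵥ x) x := by
  ext i
  cases i using Fin.cases with
  | zero => simp [mulVec, dotProduct, hA0]
  | succ i => simp [mulVec, dotProduct, hAsucc, ite_mul]

theorem mulVec_injective_of_rows {R : Type*} [NonAssocSemiring R] {n : ℕ}
    {A : Matrix (Fin (n + 1)) (Fin n) R} {a : Fin n → R} (hA0 : ∀ j, A 0 j = a j)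
    (hAsucc : ∀ i : Fin n, ∀ j, A i.succ j = if i = j then 1 else 0) :
    Function.Injective A.mulVec := fun x y hxy => by
  rw [mulVec_eq_cons_of_rows hA0 hAsucc, mulVec_eq_cons_of_rows hA0 hAsucc] at hxy
  exact (Fin.cons_inj.1 hxy).2

theorem sum_smul_add_dotProduct_of_dotProduct_eq_zero {R : Type*} [CommSemiring R] {t n : ℕ}
    (M : Fin t → R) (p : Fin t → Fin n → R) (r x : Fin n → R) (hx : ∀ i, p i ⬝ᵥ x = 0) :
    (∑ i, M i • p i + r) ⬝ᵥ x = r ⬝ᵥ x := by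
  simp [add_dotProduct, sum_dotProduct, smul_dotProduct, hx]

theorem cbr_column_norm_upper_bound_general (n t : ℕ)
    (p : Fin t → Fin n → ℤ) (r : Fin n → ℤ)
    (M : Fin t → ℤ)
    (a : Fin n → ℤ) (ha : a = fun j => (∑ i, M i * p i j) + r j)
    (A : Matrix (Fin (n + 1)) (Fin n) ℤ)
    (hA0 : ∀ j, A 0 j = a j)
    (hAsucc : ∀ i : Fin n, ∀ j, A i.succ j = if i = j then 1 else 0)
    (c : ℝ) (hc : 1 ≤ c)
    (U : Matrix (Fin n) (Fin n) ℤ)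
    (hred : ∀ ℓ : ℕ, 1 ≤ ℓ → ℓ ≤ n → ∀ j : Fin n, (j : ℕ) < ℓ →
      vecEnorm (fun i => (A * U) i j) ≤
        c * succMin {y : Fin (n + 1) → ℤ | ∃ x : Fin n → ℤ, y = A.mulVec x} ℓ) :
    ∀ s : ℕ, 1 ≤ s → s ≤ n - t → ∀ j : Fin n, (j : ℕ) < s →
      vecEnorm (fun i => (A * U) i j) ≤
        c * (vecEnorm r + 1) *
          succMin {x : Fin n → ℤ | ∀ i : Fin t, ∑ m, p i m * x m = 0} s := by
  intro s hs hst j hj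
  have ha' : a = ∑ i, M i • p i + r := by ext; simp [ha]
  have hnorm : ∀ x ∈ {x : Fin n → ℤ | ∀ i : Fin t, ∑ m, p i m * x m = 0},
      vecEnorm (A.mulVecLin x) ≤ (vecEnorm r + 1) * vecEnorm x := fun x hx => by
    rw [mulVecLin_apply, mulVec_eq_cons_of_rows hA0 hAsucc, ha',
      sum_smul_add_dotProduct_of_dotProduct_eq_zero M p r x hx]
    exact vecEnorm_cons_dotProduct_le r x
  have hker : ∃ w : Fin s → Fin n → ℤ,
      (∀ k, w k ∈ {x : Fin n → ℤ | ∀ i : Fin t, ∑ m, p i m * x m = 0}) ∧ LinearIndependent ℤ w :=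
    let ⟨w, hwP, hw⟩ := exists_linearIndependent_mulVec_eq_zero (Matrix.of p) hst
    ⟨w, fun k i => congrFun (hwP k) i, hw⟩
  have hmin := succMin_le_mul_succMin_of_injective
    (L' := {y : Fin (n + 1) → ℤ | ∃ x : Fin n → ℤ, y = A.mulVec x}) A.mulVecLin
    (mulVec_injective_of_rows hA0 hAsucc) (fun x _ => ⟨x, rfl⟩)
    (by positivity [vecEnorm_nonneg r]) hnorm hs hker
  calc vecEnorm (fun i => (A * U) i j)
      ≤ c * succMin {y : Fin (n + 1) → ℤ | ∃ x : Fin n → ℤ, y = A.mulVec x} s :=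
        hred s hs (hst.trans (Nat.sub_le n t)) j hj
    _ ≤ c * ((vecEnorm r + 1) *
          succMin {x : Fin n → ℤ | ∀ i : Fin t, ∑ m, p i m * x m = 0} s) :=
        mul_le_mul_of_nonneg_left hmin (by linarith)
    _ = _ := by ring

theorem cbr_column_norm_upper_bound (n t : ℕ) (ht : 1 ≤ t) (htn : t ≤ n)
    (p : Fin t → Fin n → ℤ) (r : Fin n → ℤ)
    (M : Fin t → ℤ)
    (a : Fin n → ℤ) (ha : a = fun j => (∑ i, M i * p i j) + r j)
    (A : Matrix (Fin (n + 1)) (Fin n) ℤ)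
    (hA0 : ∀ j, A 0 j = a j)
    (hAsucc : ∀ i : Fin n, ∀ j, A i.succ j = if i = j then 1 else 0)
    (c : ℝ) (hc : 1 ≤ c)
    (U : Matrix (Fin n) (Fin n) ℤ) (hU : U.det = 1 ∨ U.det = -1)
    (hred : ∀ ℓ : ℕ, 1 ≤ ℓ → ℓ ≤ n → ∀ j : Fin n, (j : ℕ) < ℓ →
      vecEnorm (fun i => (A * U) i j) ≤
        c * succMin {y : Fin (n + 1) → ℤ | ∃ x : Fin n → ℤ, y = A.mulVec x} ℓ) :
    ∀ s : ℕ, 1 ≤ s → s ≤ n - t → ∀ j : Fin n, (j : ℕ) < s →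
      vecEnorm (fun i => (A * U) i j) ≤
        c * (vecEnorm r + 1) *
          succMin {x : Fin n → ℤ | ∀ i : Fin t, ∑ m, p i m * x m = 0} s :=
  cbr_column_norm_upper_bound_general n t p r M a ha A hA0 hAsucc c hc U hred
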